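/- On ℝ⁴ ∖ {0} with r(p) = ‖p‖, let E⁰, E¹, E², E³ be the 1-forms E⁰(p)(v) = (p₀v₀ + p₁v₁ + p₂v₂ + p₃v₃)/r, E¹(p)(v) = (−p₁v₀ + p₀v₁ + p₃v₂ − p₂v₃)/r, E²(p)(v) = (−p₂v₀ − p₃v₁ + p₀v₂ + p₁v₃)/r, E³(p)(v) = (−p₃v₀ + p₂v₁ − p₁v₂ + p₀v₃)/r, and define the antisymmetric connection 1-forms ω^a{}_b = −ω^b{}_a (a,b ∈ {0,1,2,3}) by ω^i{}_k = (1/r) Σ_j ε_{ijk} E^j and ω^i{}_0 = (1/r) E^i for i,j,k ∈ {1,2,3}, where ε is the Levi-Civita symbol. Then the torsionless condition holds: for each a and all p ∈ ℝ⁴ ∖ {0}, u, v ∈ ℝ⁴, dE^a(p)(u,v) + Σ_b (ω^a{}_b ∧ E^b)(p)(u,v) = 0. (Thus ω is the Levi–Civita connection of the Euclidean metric expressed in the quaternionic frame E.) -/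

import Mathlib

noncomputable section

/-- Exterior derivative of a 1-form on `ℝ⁴` (Euclidean). -/
def exd (η : EuclideanSpace ℝ (Fin 4) → (EuclideanSpace ℝ (Fin 4) →L[ℝ] ℝ))
    (p u v : EuclideanSpace ℝ (Fin 4)) : ℝ :=
  (fderiv ℝ η p u) v - (fderiv ℝ η p v) u

/-- Wedge product of two 1-forms on `ℝ⁴` (Euclidean). -/
def wedge (η ξ : EuclideanSpace ℝ (Fin 4) → (EuclideanSpace ℝ (Fin 4) →L[ℝ] ℝ))
    (p u v : EuclideanSpace ℝ (Fin 4)) : ℝ :=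
  η p u * ξ p v - η p v * ξ p u

/-- The Levi-Civita symbol on three (spatial) indices. -/
def eps (i j k : Fin 3) : ℝ :=
  if (i, j, k) = (0, 1, 2) ∨ (i, j, k) = (1, 2, 0) ∨ (i, j, k) = (2, 0, 1) then 1
  else if (i, j, k) = (0, 2, 1) ∨ (i, j, k) = (2, 1, 0) ∨ (i, j, k) = (1, 0, 2) then -1
  else 0

/-- The quaternionic Maurer–Cartan coframe `E⁰, E¹, E², E³` on `ℝ⁴ ∖ {0}`. -/
def E : Fin 4 → EuclideanSpace ℝ (Fin 4) → (EuclideanSpace ℝ (Fin 4) →L[ℝ] ℝ) :=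
  ![fun p => (1 / ‖p‖) • (p 0 • EuclideanSpace.proj (0 : Fin 4)
      + p 1 • EuclideanSpace.proj (1 : Fin 4)
      + p 2 • EuclideanSpace.proj (2 : Fin 4)
      + p 3 • EuclideanSpace.proj (3 : Fin 4)),
    fun p => (1 / ‖p‖) • ((-p 1) • EuclideanSpace.proj (0 : Fin 4)
      + p 0 • EuclideanSpace.proj (1 : Fin 4)
      + p 3 • EuclideanSpace.proj (2 : Fin 4)
      + (-p 2) • EuclideanSpace.proj (3 : Fin 4)),
    fun p => (1 / ‖p‖) • ((-p 2) • EuclideanSpace.proj (0 : Fin 4)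
      + (-p 3) • EuclideanSpace.proj (1 : Fin 4)
      + p 0 • EuclideanSpace.proj (2 : Fin 4)
      + p 1 • EuclideanSpace.proj (3 : Fin 4)),
    fun p => (1 / ‖p‖) • ((-p 3) • EuclideanSpace.proj (0 : Fin 4)
      + p 2 • EuclideanSpace.proj (1 : Fin 4)
      + (-p 1) • EuclideanSpace.proj (2 : Fin 4)
      + p 0 • EuclideanSpace.proj (3 : Fin 4))]

/-!
Write `E^a = r⁻¹ β^a`, where the `β^a` (`linearCoframe a`) have linear coefficients and
`β^0 = r dr` is the form `p ↦ ⟪p, ·⟫`. Then `d(r⁻¹ β) = r⁻¹ dβ - r⁻³ β^0 ∧ β`; in particular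
`dE^0 = 0`, while for `a = 0` the connection terms `ω^0_i ∧ E^i = -r⁻¹ E^i ∧ E^i` vanish. For
`a = i + 1` the torsion equation reduces to the quadratic identity
`r² dβ^i = 2 β^0 ∧ β^i - ε_{ijk} β^j ∧ β^k` between forms with polynomial coefficients, which
is checked in coordinates.
-/

open scoped RealInnerProductSpace

section InvNorm

variable {V W : Type*} [NormedAddCommGroup V] [InnerProductSpace ℝ V]
  [NormedAddCommGroup W] [NormedSpace ℝ W] {p : V}

theorem hasFDerivAt_norm_of_ne_zero (hp : p ≠ 0) :
    HasFDerivAt (fun x : V => ‖x‖) (‖p‖⁻¹ • innerSL ℝ p) p := by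
  have h := ((hasFDerivAt_id p).norm_sq).sqrt (pow_ne_zero 2 (norm_ne_zero_iff.2 hp))
  simp only [Real.sqrt_sq (norm_nonneg _), id] at h
  convert h using 1
  ext w
  simp only [smul_apply, coe_innerSL_apply, smul_eq_mul, one_div, mul_inv_rev,
    ContinuousLinearMap.comp_id, nsmul_eq_mul, Nat.cast_ofNat]
  field_simp

theorem hasFDerivAt_inv_norm (hp : p ≠ 0) :
    HasFDerivAt (fun x : V => ‖x‖⁻¹) (-(‖p‖ ^ 3)⁻¹ • innerSL ℝ p) p :=
  ((hasDerivAt_inv (norm_ne_zero_iff.2 hp)).comp_hasFDerivAt p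
    (hasFDerivAt_norm_of_ne_zero hp)).congr_fderiv (by rw [smul_smul]; ring_nf)

theorem hasFDerivAt_inv_norm_smul (B : V →L[ℝ] W) (hp : p ≠ 0) :
    HasFDerivAt (fun x => ‖x‖⁻¹ • B x)
      (‖p‖⁻¹ • B - (‖p‖ ^ 3)⁻¹ • (innerSL ℝ p).smulRight (B p)) p :=
  ((hasFDerivAt_inv_norm hp).smul B.hasFDerivAt).congr_fderiv (by
    ext w
    simp [sub_eq_add_neg, smul_smul])

end InvNorm

local notation "ℝ⁴" => EuclideanSpace ℝ (Fin 4)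

section Forms

variable {p u v : ℝ⁴}

theorem exd_continuousLinearMap (β : ℝ⁴ →L[ℝ] ℝ⁴ →L[ℝ] ℝ) : exd β p u v = β u v - β v u := by
  simp only [exd, ContinuousLinearMap.fderiv]

theorem wedge_self (η : ℝ⁴ → ℝ⁴ →L[ℝ] ℝ) : wedge η η p u v = 0 := by
  rw [wedge, mul_comm, sub_self]

theorem wedge_smul_smul (f g : ℝ⁴ → ℝ) (η ξ : ℝ⁴ → ℝ⁴ →L[ℝ] ℝ) :
    wedge (fun x => f x • η x) (fun x => g x • ξ x) p u v = f p * g p * wedge η ξ p u v := by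
  simp only [wedge, smul_apply, smul_eq_mul]
  ring

theorem exd_inv_norm_smul (β : ℝ⁴ →L[ℝ] ℝ⁴ →L[ℝ] ℝ) (hp : p ≠ 0) :
    exd (fun x => ‖x‖⁻¹ • β x) p u v
      = ‖p‖⁻¹ * exd β p u v - (‖p‖ ^ 3)⁻¹ * wedge (innerSL ℝ) β p u v := by
  simp only [exd, (hasFDerivAt_inv_norm_smul β hp).fderiv, ContinuousLinearMap.fderiv, wedge]
  simp only [sub_apply, smul_apply, ContinuousLinearMap.smulRight_apply, coe_innerSL_apply,
    smul_eq_mul]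
  ring

end Forms

def linearCoframe : Fin 4 → ℝ⁴ →L[ℝ] ℝ⁴ →L[ℝ] ℝ :=
  let P := EuclideanSpace.proj (𝕜 := ℝ) (ι := Fin 4)
  ![(P 0).smulRight (P 0) + (P 1).smulRight (P 1) + (P 2).smulRight (P 2)
      + (P 3).smulRight (P 3),
    -(P 1).smulRight (P 0) + (P 0).smulRight (P 1) + (P 3).smulRight (P 2)
      - (P 2).smulRight (P 3),
    -(P 2).smulRight (P 0) - (P 3).smulRight (P 1) + (P 0).smulRight (P 2)
      + (P 1).smulRight (P 3),
    -(P 3).smulRight (P 0) + (P 2).smulRight (P 1) - (P 1).smulRight (P 2)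
      + (P 0).smulRight (P 3)]

theorem E_eq_inv_norm_smul_linearCoframe (a : Fin 4) :
    E a = fun x => ‖x‖⁻¹ • linearCoframe a x := by
  funext x
  ext w
  fin_cases a <;> simp [E, linearCoframe] <;> ring

theorem linearCoframe_zero : linearCoframe 0 = innerSL ℝ := by
  ext x w
  rw [innerSL_apply_apply]
  simp [linearCoframe, PiLp.inner_apply, Fin.sum_univ_four]
  ring

theorem linearCoframe_structure (i : Fin 3) (p u v : ℝ⁴) :
    ‖p‖ ^ 2 * exd (linearCoframe i.succ) p u v
      = 2 * wedge (linearCoframe 0) (linearCoframe i.succ) p u v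
        - ∑ j, ∑ k, eps i j k * wedge (linearCoframe j.succ) (linearCoframe k.succ) p u v := by
  rw [exd_continuousLinearMap, EuclideanSpace.norm_sq_eq]
  fin_cases i <;> simp [linearCoframe, wedge, eps, Fin.sum_univ_three, Fin.sum_univ_four] <;> ring

section Coframe

variable {p : ℝ⁴} (u v : ℝ⁴)

theorem exd_E_zero (hp : p ≠ 0) : exd (E 0) p u v = 0 := by
  rw [E_eq_inv_norm_smul_linearCoframe, linearCoframe_zero, exd_inv_norm_smul _ hp,
    exd_continuousLinearMap, wedge_self, innerSL_apply_apply, innerSL_apply_apply,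
    real_inner_comm, sub_self]
  ring

theorem exd_E_succ (i : Fin 3) (hp : p ≠ 0) :
    exd (E i.succ) p u v = ‖p‖⁻¹ * (wedge (E 0) (E i.succ) p u v
      - ∑ j, ∑ k, eps i j k * wedge (E j.succ) (E k.succ) p u v) := by
  have hr : ‖p‖ ≠ 0 := norm_ne_zero_iff.2 hp
  simp only [E_eq_inv_norm_smul_linearCoframe, exd_inv_norm_smul _ hp, wedge_smul_smul]
  simp only [mul_left_comm (eps _ _ _), ← Finset.mul_sum]
  rw [← linearCoframe_zero]
  field_simp
  linear_combination linearCoframe_structure i p u v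

end Coframe

/-- The connection 1-forms `ω^i{}_k = (1/r) ε_{ijk} E^j`, `ω^i{}_0 = (1/r) E^i`,
antisymmetric (`ω^a{}_b = −ω^b{}_a`), satisfy the torsionless condition
`dE^a + ω^a{}_b ∧ E^b = 0` for the quaternionic Maurer–Cartan coframe: thus `ω`
is the Levi–Civita connection of the Euclidean metric in the quaternionic
frame. -/
theorem quaternionic_frame_levi_civita
    (ω : Fin 4 → Fin 4 → EuclideanSpace ℝ (Fin 4) → (EuclideanSpace ℝ (Fin 4) →L[ℝ] ℝ))
    (hAnti : ∀ a b, ∀ p, ω a b p = -(ω b a p))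
    (hSpatial : ∀ i k : Fin 3, ∀ p,
      ω i.succ k.succ p = (1 / ‖p‖) • ∑ j : Fin 3, eps i j k • E j.succ p)
    (hTime : ∀ i : Fin 3, ∀ p, ω i.succ 0 p = (1 / ‖p‖) • E i.succ p) :
    ∀ a : Fin 4, ∀ p : EuclideanSpace ℝ (Fin 4), p ≠ 0 →
      ∀ u v : EuclideanSpace ℝ (Fin 4),
        exd (E a) p u v + ∑ b : Fin 4, wedge (ω a b) (E b) p u v = 0 := by
  intro a p hp u v
  cases a using Fin.cases with
  | zero =>
    have h00 (w : ℝ⁴) : ω 0 0 p w = 0 := self_eq_neg.mp (DFunLike.congr_fun (hAnti 0 0 p) w)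
    have h0k (k : Fin 3) : ω 0 k.succ p = -((1 / ‖p‖) • E k.succ p) := by
      rw [hAnti, hTime]
    rw [Fin.sum_univ_succ, exd_E_zero u v hp]
    simp only [wedge, h00, h0k, neg_apply, smul_apply, smul_eq_mul, Fin.sum_univ_three]
    ring
  | succ i =>
    rw [Fin.sum_univ_succ, exd_E_succ u v i hp]
    simp only [wedge, hTime, hSpatial, add_apply, smul_apply, smul_eq_mul,
      Fin.sum_univ_three]
    ring

end
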